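/- arXiv:0906.0384 — 3 statements merged into one kernel-verified Lean document; each statement's English description precedes it below -/
import Mathlib

section
/- Let |φ₀⟩ and |φ₁⟩ be nonzero, linearly independent, non-orthogonal vectors in a complex inner product space. Then there exist real numbers θ, ξ with cos θ ≠ 0 such that the vectors |φ₀⟩ − (e^{iξ} tan θ)|φ₁⟩ and (e^{−iξ} tan θ)|φ₀⟩ + |φ₁⟩ are orthogonal. -/
open scoped InnerProductSpace ComplexConjugate

/-- If |φ₀⟩, |φ₁⟩ are nonzero, linearly independent, non-orthogonal vectors in a
complex inner product space, then there are reals θ, ξ with cos θ ≠ 0 such that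
|φ₀⟩ − (e^{iξ} tan θ)|φ₁⟩ and (e^{−iξ} tan θ)|φ₀⟩ + |φ₁⟩ are orthogonal. -/
theorem stmt_3 {H : Type*} [NormedAddCommGroup H] [InnerProductSpace ℂ H]
    (φ₀ φ₁ : H) (h0 : φ₀ ≠ 0) (h1 : φ₁ ≠ 0)
    (hind : LinearIndependent ℂ ![φ₀, φ₁])
    (hno : ⟪φ₀, φ₁⟫_ℂ ≠ 0) :
    ∃ θ ξ : ℝ, Real.cos θ ≠ 0 ∧
      ⟪φ₀ - (Complex.exp (ξ * Complex.I) * (Real.tan θ : ℂ)) • φ₁,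
        (Complex.exp (-ξ * Complex.I) * (Real.tan θ : ℂ)) • φ₀ + φ₁⟫_ℂ = 0 := by
  set c : ℂ := ⟪φ₀, φ₁⟫_ℂ with hc
  set r : ℝ := ‖c‖ with hr
  have hrpos : 0 < r := by
    simpa [hr] using (norm_pos_iff.mpr hno)
  set b : ℝ := ‖φ₀‖ ^ 2 - ‖φ₁‖ ^ 2 with hb
  set s : ℝ := Real.sqrt (b ^ 2 + 4 * r ^ 2) with hsdef
  have hs2 : s ^ 2 = b ^ 2 + 4 * r ^ 2 := Real.sq_sqrt (by positivity)
  set t : ℝ := (b + s) / (2 * r) with htdef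
  have hquad : r * t ^ 2 - b * t - r = 0 := by
    have h2r : (2 * r) ≠ 0 := by positivity
    rw [htdef]
    field_simp
    nlinarith [hs2]
  refine ⟨Real.arctan t, -Complex.arg c, ?_, ?_⟩
  · exact (Real.cos_arctan_pos t).ne'
  · rw [Real.tan_arctan]
    set E : ℂ := Complex.exp (Complex.arg c * Complex.I) with hE
    set F : ℂ := Complex.exp (-(Complex.arg c) * Complex.I) with hF
    have hEF : E * F = 1 := by
      rw [hE, hF, ← Complex.exp_add]
      ring_nf
      exact Complex.exp_zero
    have hcE : (r : ℂ) * E = c := Complex.norm_mul_exp_arg_mul_I c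
    have hconjF : (starRingEnd ℂ) F = E := by
      rw [hF, hE, ← Complex.exp_conj]
      congr 1
      simp [Complex.conj_I]
    have hconjc : (starRingEnd ℂ) c = (r : ℂ) * F := by
      rw [← hcE]
      rw [map_mul, Complex.conj_ofReal, hE, hF, ← Complex.exp_conj]
      congr 2
      simp [Complex.conj_I]
    have hexp1 : Complex.exp (((-Complex.arg c : ℝ) : ℂ) * Complex.I) = F := by
      rw [hF]; push_cast; ring_nf
    have hexp2 : Complex.exp (-((-Complex.arg c : ℝ) : ℂ) * Complex.I) = E := by
      rw [hE]; push_cast; ring_nf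
    rw [hexp1, hexp2]
    simp only [inner_sub_left, inner_add_right, inner_smul_left, inner_smul_right,
      inner_self_eq_norm_sq_to_K, map_mul, Complex.conj_ofReal, hconjF, ← hc, hconjc]
    have hquadC : (r : ℂ) * (t : ℂ) ^ 2 - (b : ℂ) * (t : ℂ) - (r : ℂ) = 0 := by
      exact_mod_cast congrArg (Complex.ofReal) hquad
    have hbC : (b : ℂ) = (‖φ₀‖ : ℂ) ^ 2 - (‖φ₁‖ : ℂ) ^ 2 := by
      rw [hb]; push_cast; ring
    have h10 : ⟪φ₁, φ₀⟫_ℂ = (r : ℂ) * F := by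
      rw [← inner_conj_symm, ← hc, hconjc]
    rw [h10, ← hcE]
    have hcoe : ∀ x : ℝ, (RCLike.ofReal x : ℂ) = Complex.ofReal x := fun _ => rfl
    simp only [hcoe]
    linear_combination (-E * (t : ℂ)) * hbC - E * hquadC + ((r : ℂ) * (t : ℂ) ^ 2 * E - (r : ℂ) + ((r:ℂ) - 2*(t:ℂ)^2*(r:ℂ)*E)) * hEF
end

section
/- Let M be a d²×d² unitary matrix whose first d²−2 columns are, in the double-index ordering of the basis {|ij⟩}, the vectors with (i,j)-entry √λ_j u^{(n)}_{ij} for unitary d×d matrices U^{(n)} (n = 0,...,d²−3), and whose last two columns have (i,j)-entries √λ_j k^{(0)}_{ij}/√x and √λ_j k^{(1)}_{ij}/√(1−x) respectively, where all λ_j > 0. Then for every pair of distinct indices i ≠ j in {0,...,d−1}: (1/x)⟨ᵢK^{(0)}, ⱼK^{(0)}⟩ + (1/(1−x))⟨ᵢK^{(1)}, ⱼK^{(1)}⟩ = 0, where ⱼK^{(q)} denotes the j-th column of K^{(q)}. -/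
open Matrix

/-- Column-orthogonality consequence for the augmented message matrix M: if the
d²×d² matrix M whose first d²−2 columns have (i,j)-entries √λⱼ·u⁽ⁿ⁾ᵢⱼ (with each
U⁽ⁿ⁾ unitary) and whose last two columns have entries √λⱼ·k⁽⁰⁾ᵢⱼ/√x and
√λⱼ·k⁽¹⁾ᵢⱼ/√(1−x) is unitary, then for i ≠ j,
(1/x)⟨ᵢK⁽⁰⁾, ⱼK⁽⁰⁾⟩ + (1/(1−x))⟨ᵢK⁽¹⁾, ⱼK⁽¹⁾⟩ = 0. -/
theorem stmt_10 (d : ℕ) (hd : 2 ≤ d) (lam : Fin d → ℝ) (hlam : ∀ j, 0 < lam j)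
    (x : ℝ) (hx0 : 0 < x) (hx1 : x < 1)
    (U : Fin (d ^ 2 - 2) → Matrix (Fin d) (Fin d) ℂ)
    (hU : ∀ n, U n ∈ Matrix.unitaryGroup (Fin d) ℂ)
    (K : Fin 2 → Matrix (Fin d) (Fin d) ℂ)
    (M : Matrix (Fin d × Fin d) (Fin (d ^ 2 - 2) ⊕ Fin 2) ℂ)
    (hMU : ∀ (n : Fin (d ^ 2 - 2)) (i j : Fin d),
      M (i, j) (Sum.inl n) = (Real.sqrt (lam j) : ℂ) * U n i j)
    (hMK : ∀ (q : Fin 2) (i j : Fin d),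
      M (i, j) (Sum.inr q) = (Real.sqrt (lam j) : ℂ) * K q i j
        / (Real.sqrt (if q = 0 then x else 1 - x) : ℂ))
    (hM1 : Mᴴ * M = 1) (hM2 : M * Mᴴ = 1) :
    ∀ i j : Fin d, i ≠ j →
      (1 / (x : ℂ)) * ∑ s, star (K 0 s i) * K 0 s j
        + (1 / ((1 - x : ℝ) : ℂ)) * ∑ s, star (K 1 s i) * K 1 s j = 0 := by
  intro i j hij
  have h1x : (0:ℝ) < 1 - x := by linarith
  have hxx : (Real.sqrt x : ℂ) * (Real.sqrt x : ℂ) = (x : ℂ) := by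
    rw [← Complex.ofReal_mul, Real.mul_self_sqrt hx0.le]
  have h1xx : (Real.sqrt (1-x) : ℂ) * (Real.sqrt (1-x) : ℂ) = ((1-x : ℝ) : ℂ) := by
    rw [← Complex.ofReal_mul, Real.mul_self_sqrt h1x.le]
  have hxne : (x : ℂ) ≠ 0 := by exact_mod_cast hx0.ne'
  have h1xne : ((1-x : ℝ) : ℂ) ≠ 0 := by exact_mod_cast h1x.ne'
  have hli : (Real.sqrt (lam i) : ℂ) ≠ 0 := by
    exact_mod_cast (Real.sqrt_pos.mpr (hlam i)).ne'
  have hlj : (Real.sqrt (lam j) : ℂ) ≠ 0 := by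
    exact_mod_cast (Real.sqrt_pos.mpr (hlam j)).ne'
  -- unitarity of each U n gives column orthogonality
  have hUn : ∀ n : Fin (d ^ 2 - 2), ∑ s, U n s i * star (U n s j) = 0 := by
    intro n
    have h1 : star (U n) * U n = 1 := (hU n).1
    have h2 := congrFun (congrFun h1 j) i
    simp only [Matrix.mul_apply, Matrix.one_apply, Matrix.star_apply,
      if_neg (hij.symm : j ≠ i)] at h2
    calc ∑ s, U n s i * star (U n s j)
        = ∑ s, star ((U n)) j s * U n s i := by
          apply Finset.sum_congr rfl; intro s _
          simp [Matrix.star_apply, mul_comm]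
      _ = 0 := h2
  -- row orthogonality summed over s
  have key : ∑ s : Fin d, ∑ c, M (s, i) c * star (M (s, j) c) = 0 := by
    have : ∀ s : Fin d, (M * Mᴴ) (s, i) (s, j) = 0 := by
      intro s
      rw [hM2]
      simp [Matrix.one_apply, Prod.ext_iff, hij]
    calc ∑ s : Fin d, ∑ c, M (s, i) c * star (M (s, j) c)
        = ∑ s : Fin d, (M * Mᴴ) (s, i) (s, j) := by
          apply Finset.sum_congr rfl; intro s _
          simp [Matrix.mul_apply, Matrix.conjTranspose_apply]
      _ = 0 := by simp [this]
  -- rewrite each summand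
  have step : ∀ s : Fin d, ∑ c, M (s, i) c * star (M (s, j) c)
      = (∑ n, ((Real.sqrt (lam i) : ℂ) * (Real.sqrt (lam j) : ℂ)) * (U n s i * star (U n s j)))
        + ((Real.sqrt (lam i) : ℂ) * (Real.sqrt (lam j) : ℂ)) *
          ((1/(x:ℂ)) * (K 0 s i * star (K 0 s j))
            + (1/((1-x:ℝ):ℂ)) * (K 1 s i * star (K 1 s j))) := by
    intro s
    rw [Fintype.sum_sum_type]
    congr 1
    · apply Finset.sum_congr rfl; intro n _
      rw [hMU, hMU]
      simp only [star_mul', Complex.star_def, Complex.conj_ofReal]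
      ring
    · rw [Fin.sum_univ_two]
      simp only [hMK]
      simp only [if_true, show ((1:Fin 2) = 0) ↔ False from by decide, if_false]
      simp only [star_div₀, star_mul', Complex.star_def, Complex.conj_ofReal]
      rw [div_mul_div_comm, div_mul_div_comm, hxx, h1xx]
      field_simp
  -- combine
  have key2 : ((Real.sqrt (lam i) : ℂ) * (Real.sqrt (lam j) : ℂ)) *
      ((1/(x:ℂ)) * ∑ s, K 0 s i * star (K 0 s j)
        + (1/((1-x:ℝ):ℂ)) * ∑ s, K 1 s i * star (K 1 s j)) = 0 := by
    calc ((Real.sqrt (lam i) : ℂ) * (Real.sqrt (lam j) : ℂ)) *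
      ((1/(x:ℂ)) * ∑ s, K 0 s i * star (K 0 s j)
        + (1/((1-x:ℝ):ℂ)) * ∑ s, K 1 s i * star (K 1 s j))
        = ∑ s : Fin d, ∑ c, M (s, i) c * star (M (s, j) c) := by
          rw [Finset.sum_congr rfl (fun s _ => step s), Finset.sum_add_distrib,
            Finset.sum_comm]
          have hz : ∑ n : Fin (d ^ 2 - 2), ∑ s : Fin d,
              ((Real.sqrt (lam i) : ℂ) * (Real.sqrt (lam j) : ℂ)) *
                (U n s i * star (U n s j)) = 0 := by
            apply Finset.sum_eq_zero; intro n _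
            rw [← Finset.mul_sum, hUn n, mul_zero]
          rw [hz, zero_add, ← Finset.mul_sum, Finset.sum_add_distrib,
            ← Finset.mul_sum, ← Finset.mul_sum]
      _ = 0 := key
  have key3 : (1/(x:ℂ)) * ∑ s, K 0 s i * star (K 0 s j)
      + (1/((1-x:ℝ):ℂ)) * ∑ s, K 1 s i * star (K 1 s j) = 0 := by
    rcases mul_eq_zero.mp key2 with h | h
    · exact absurd h (mul_ne_zero hli hlj)
    · exact h
  have := congrArg star key3
  simpa [star_add, star_mul', star_sum, star_div₀, star_one,
    Complex.star_def, Complex.conj_ofReal, map_sum] using this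
end

section
/- Let d ≥ 2, x ∈ (0,1), and positive reals λ_0 ≥ ... ≥ λ_{d-1} summing to 1 with associated b_j ∈ ℝ satisfying λ_j(d²−2 + b_j/x + (1−b_j)/(1−x)) = d for all j. If additionally (1−b_0)/(1−x) = γ − b_0/x where γ = Σ_j 1/λ_j − (d²−2), then λ_j = 1/d for all j. -/
/-- If λⱼ(d²−2 + bⱼ/x + (1−bⱼ)/(1−x)) = d for all j, λ decreasing positive
summing to 1, and (1−b₀)/(1−x) = γ − b₀/x where γ = Σⱼ 1/λⱼ − (d²−2), then
λⱼ = 1/d for all j. -/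
theorem stmt_13 (d : ℕ) (hd : 2 ≤ d) (x : ℝ) (hx0 : 0 < x) (hx1 : x < 1)
    (lam b : Fin d → ℝ) (hpos : ∀ j, 0 < lam j)
    (hdec : ∀ i j : Fin d, i ≤ j → lam j ≤ lam i)
    (hsum : ∑ j, lam j = 1)
    (heq : ∀ j, lam j * ((d : ℝ) ^ 2 - 2 + b j / x + (1 - b j) / (1 - x)) = d)
    (hkey : (1 - b ⟨0, by omega⟩) / (1 - x)
      = (∑ j, 1 / lam j - ((d : ℝ) ^ 2 - 2)) - b ⟨0, by omega⟩ / x) :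
    ∀ j, lam j = 1 / d := by
  set j0 : Fin d := ⟨0, by omega⟩ with hj0
  have h0 := heq j0
  rw [hkey] at h0
  -- h0 : lam j0 * (∑ j, 1/lam j) = d
  have h0' : lam j0 * (∑ j, 1 / lam j) = d := by rw [← h0]; ring
  have hsum0 : ∑ j : Fin d, (lam j0 / lam j - 1) = 0 := by
    have : ∑ j : Fin d, lam j0 / lam j = lam j0 * ∑ j, 1 / lam j := by
      rw [Finset.mul_sum]; apply Finset.sum_congr rfl; intro j _; ring
    rw [Finset.sum_sub_distrib, this, h0']
    simp
  have hall : ∀ j : Fin d, lam j0 / lam j - 1 = 0 := by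
    intro j
    have := (Finset.sum_eq_zero_iff_of_nonneg (fun j _ => by
      have h1 : lam j ≤ lam j0 := hdec j0 j (Fin.mk_le_mk.mpr (Nat.zero_le _))
      have h2 : 0 < lam j := hpos j
      have : 1 ≤ lam j0 / lam j := (one_le_div h2).mpr h1
      linarith)).mp hsum0
    exact this j (Finset.mem_univ j)
  have heqlam : ∀ j : Fin d, lam j = lam j0 := by
    intro j
    have := hall j
    have h2 := (hpos j).ne'
    field_simp at this
    linarith
  have hl0 : lam j0 = 1 / d := by
    have : ∑ j : Fin d, lam j = d * lam j0 := by
      rw [Finset.sum_congr rfl (fun j _ => heqlam j)]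
      simp [mul_comm]
    rw [hsum] at this
    have hd0 : (0:ℝ) < d := by positivity
    field_simp
    linarith
  intro j; rw [heqlam j, hl0]
end
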